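/- Let a : ℝ → ℝ be continuous on [0,1] with 0 < a₀ ≤ a(x) ≤ a₁ for all x ∈ [0,1]. Then there exists a constant C > 0 depending only on a₀ and a₁ such that for all continuous f, g : ℝ → ℝ on [0,1] and all h₀, h₁ ∈ ℝ there exists a unique pair (ū, p̄) of continuously differentiable functions on [0,1] satisfying p̄′(x) + a(x)·ū(x) = f(x) and ū′(x) = g(x) for all x ∈ [0,1] and p̄(0) = h₀, p̄(1) = h₁; moreover this solution satisfies (‖ū‖² + ‖ū′‖²)^{1/2} + (‖p̄‖² + ‖p̄′‖²)^{1/2} ≤ C·(‖f‖ + ‖g‖ + |h₀| + |h₁|), where ‖f‖ = (∫₀¹ f(x)² dx)^{1/2}. -/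

import Mathlib

open MeasureTheory Set

/-- The squared L²(0,1) norm `‖f‖² = ∫₀¹ f² dx`. -/
noncomputable def L2nsq (f : ℝ → ℝ) : ℝ := ∫ x in (0:ℝ)..1, (f x) ^ 2

/-- The L²(0,1) norm. -/
noncomputable def L2nrm (f : ℝ → ℝ) : ℝ := Real.sqrt (L2nsq f)

/-- `(ū, p̄)` solves the stationary damped wave system
`p̄′ + a ū = f`, `ū′ = g` on `[0,1]` with `p̄(0)=h₀`, `p̄(1)=h₁`.
(Differentiability of `ū, p̄` on `[0,1]` is encoded via `HasDerivAt` with the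
derivatives given by the equations; continuity of the derivatives follows from
the continuity of `a, f, g, ū`.) -/
def IsStationarySolution (a f g : ℝ → ℝ) (h₀ h₁ : ℝ) (ub pb : ℝ → ℝ) : Prop :=
  (∀ x ∈ Icc (0:ℝ) 1,
      HasDerivAt ub (g x) x ∧ HasDerivAt pb (f x - a x * ub x) x) ∧
  pb 0 = h₀ ∧ pb 1 = h₁

/-!
Integrating `ū′ = g` gives `ū = c + ∫₀ˣ g`, and then `p̄ = h₀ + ∫₀ˣ (f - a ū)`. The remaining
condition `p̄(1) = h₁` is affine in `c` with slope `-∫₀¹ a ≤ -a₀ < 0`; this fixes `c` (uniqueness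
is the same computation for the difference of two solutions) and bounds `|c|` by the data. By
Cauchy–Schwarz a primitive of an `L²(0,1)` function is bounded by its `L²` norm, so `ū` and `p̄` are
bounded on `[0,1]` by a multiple of `‖f‖ + ‖g‖ + |h₀| + |h₁|`, and so are the `L²` norms of
`ū, p̄, ū′ = g` and `p̄′ = f - a ū`.
-/

open scoped Interval

lemma Real.sqrt_add_le_add_of_le_sq {x y A B : ℝ} (hA : 0 ≤ A) (hB : 0 ≤ B)
    (hx : x ≤ A ^ 2) (hy : y ≤ B ^ 2) : √(x + y) ≤ A + B :=
  Real.sqrt_le_iff.mpr ⟨add_nonneg hA hB, by nlinarith [mul_nonneg hA hB]⟩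

lemma abs_mul_le_of_le_of_abs_le {x y A M : ℝ} (hx : 0 ≤ x) (hxA : x ≤ A) (hy : |y| ≤ M) :
    |x * y| ≤ A * M := by
  rw [abs_mul, abs_of_nonneg hx]
  exact mul_le_mul hxA hy (abs_nonneg y) (hx.trans hxA)

lemma ContinuousOn.exists_continuous_eqOn_Icc {f : ℝ → ℝ} {a b : ℝ} (hab : a ≤ b)
    (hf : ContinuousOn f (Icc a b)) : ∃ F : ℝ → ℝ, Continuous F ∧ EqOn F f (Icc a b) :=
  ⟨fun x => f (projIcc a b hab x),
    hf.comp_continuous (continuous_subtype_val.comp continuous_projIcc)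
      fun x => (projIcc a b hab x).2,
    fun x hx => by simp [projIcc_of_mem hab hx]⟩

lemma L2nsq_congr {f g : ℝ → ℝ} (h : EqOn f g (Icc 0 1)) : L2nsq f = L2nsq g :=
  intervalIntegral.integral_congr fun x hx => by
    rw [uIcc_of_le zero_le_one] at hx
    simp only [h hx]

lemma L2nrm_congr {f g : ℝ → ℝ} (h : EqOn f g (Icc 0 1)) : L2nrm f = L2nrm g := by
  rw [L2nrm, L2nrm, L2nsq_congr h]

lemma L2nsq_nonneg (f : ℝ → ℝ) : 0 ≤ L2nsq f :=
  intervalIntegral.integral_nonneg zero_le_one fun x _ => sq_nonneg (f x)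

lemma L2nrm_nonneg (f : ℝ → ℝ) : 0 ≤ L2nrm f := Real.sqrt_nonneg _

lemma L2nsq_eq_L2nrm_sq (f : ℝ → ℝ) : L2nsq f = L2nrm f ^ 2 := (Real.sq_sqrt (L2nsq_nonneg f)).symm

lemma L2nsq_le_sq_of_abs_le {f : ℝ → ℝ} {M : ℝ} (h : ∀ x ∈ Icc (0:ℝ) 1, |f x| ≤ M) :
    L2nsq f ≤ M ^ 2 := by
  have hbound : ∀ x ∈ Ι (0:ℝ) 1, ‖f x ^ 2‖ ≤ M ^ 2 := fun x hx => by
    rw [uIoc_of_le zero_le_one] at hx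
    rw [Real.norm_eq_abs, abs_pow]
    exact pow_le_pow_left₀ (abs_nonneg _) (h x (Ioc_subset_Icc_self hx)) 2
  simpa [L2nsq] using
    (intervalIntegral.norm_integral_le_of_norm_le_const hbound).trans' (le_abs_self _)

lemma L2nsq_le_of_abs_le_abs_add {f g : ℝ → ℝ} {M : ℝ} (hf : Continuous f) (hg : Continuous g)
    (h : ∀ x ∈ Icc (0:ℝ) 1, |f x| ≤ |g x| + M) : L2nsq f ≤ 2 * L2nsq g + 2 * M ^ 2 := by
  have hpt : ∀ x ∈ Icc (0:ℝ) 1, f x ^ 2 ≤ 2 * g x ^ 2 + 2 * M ^ 2 := fun x hx => by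
    have := h x hx
    nlinarith [abs_nonneg (f x), sq_abs (f x), sq_abs (g x), sq_nonneg (|g x| - M)]
  calc L2nsq f ≤ ∫ x in (0:ℝ)..1, (2 * g x ^ 2 + 2 * M ^ 2) :=
        intervalIntegral.integral_mono_on zero_le_one ((hf.pow 2).intervalIntegrable _ _)
          ((by fun_prop : Continuous fun x => 2 * g x ^ 2 + 2 * M ^ 2).intervalIntegrable _ _) hpt
    _ = 2 * L2nsq g + 2 * M ^ 2 := by
        rw [intervalIntegral.integral_add
            ((by fun_prop : Continuous fun x => 2 * g x ^ 2).intervalIntegrable _ _)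
            intervalIntegrable_const,
          intervalIntegral.integral_const_mul]
        simp [L2nsq]

noncomputable def dataNorm (f g : ℝ → ℝ) (h₀ h₁ : ℝ) : ℝ := L2nrm f + L2nrm g + |h₀| + |h₁|

lemma dataNorm_nonneg (f g : ℝ → ℝ) (h₀ h₁ : ℝ) : 0 ≤ dataNorm f g h₀ h₁ := by
  unfold dataNorm
  linarith [L2nrm_nonneg f, L2nrm_nonneg g, abs_nonneg h₀, abs_nonneg h₁]

noncomputable def H1nrm (u : ℝ → ℝ) : ℝ := √(L2nsq u + L2nsq (deriv u))

lemma integral_abs_le_L2nrm {f : ℝ → ℝ} (hf : Continuous f) : ∫ x in (0:ℝ)..1, |f x| ≤ L2nrm f := by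
  set I := ∫ x in (0:ℝ)..1, |f x|
  -- `0 ≤ ∫ (|f| - I)² = ‖f‖² - I²`
  have hexpand : ∫ x in (0:ℝ)..1, (|f x| - I) ^ 2 = L2nsq f - I ^ 2 := by
    have hpt : ∀ x, (|f x| - I) ^ 2 = f x ^ 2 - 2 * I * |f x| + I ^ 2 := fun x => by
      rw [sub_sq, sq_abs]; ring
    simp_rw [hpt]
    rw [intervalIntegral.integral_add ((by fun_prop : Continuous fun x =>
        f x ^ 2 - 2 * I * |f x|).intervalIntegrable _ _) intervalIntegrable_const,
      intervalIntegral.integral_sub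
        ((by fun_prop : Continuous fun x => f x ^ 2).intervalIntegrable _ _)
        ((by fun_prop : Continuous fun x => 2 * I * |f x|).intervalIntegrable _ _),
      intervalIntegral.integral_const_mul]
    simp [L2nsq]
    ring
  have hvar : 0 ≤ ∫ x in (0:ℝ)..1, (|f x| - I) ^ 2 :=
    intervalIntegral.integral_nonneg zero_le_one fun x _ => sq_nonneg _
  exact (le_abs_self I).trans (Real.abs_le_sqrt (by linarith))

lemma abs_primitive_le_L2nrm {f : ℝ → ℝ} (hf : Continuous f) {x : ℝ} (hx : x ∈ Icc (0:ℝ) 1) :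
    |∫ t in (0:ℝ)..x, f t| ≤ L2nrm f :=
  calc |∫ t in (0:ℝ)..x, f t| ≤ ∫ t in (0:ℝ)..x, |f t| :=
        intervalIntegral.abs_integral_le_integral_abs hx.1
    _ ≤ ∫ t in (0:ℝ)..1, |f t| :=
        intervalIntegral.integral_mono_interval le_rfl hx.1 hx.2
          (ae_of_all _ fun _ => abs_nonneg _) (hf.abs.intervalIntegrable _ _)
    _ ≤ L2nrm f := integral_abs_le_L2nrm hf

lemma abs_primitive_le_of_abs_le {f : ℝ → ℝ} {M : ℝ} (h : ∀ t ∈ Icc (0:ℝ) 1, |f t| ≤ M)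
    {x : ℝ} (hx : x ∈ Icc (0:ℝ) 1) : |∫ t in (0:ℝ)..x, f t| ≤ M := by
  have hM : 0 ≤ M := (abs_nonneg _).trans (h 0 (left_mem_Icc.mpr zero_le_one))
  have hbound : ∀ t ∈ Ι (0:ℝ) x, ‖f t‖ ≤ M := fun t ht => by
    rw [uIoc_of_le hx.1] at ht
    exact h t ⟨ht.1.le, ht.2.trans hx.2⟩
  calc |∫ t in (0:ℝ)..x, f t| ≤ M * |x - 0| :=
        intervalIntegral.norm_integral_le_of_norm_le_const hbound
    _ ≤ M * 1 := by
        gcongr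
        rw [sub_zero, abs_of_nonneg hx.1]
        exact hx.2
    _ = M := mul_one M

lemma le_integral_of_forall_le {f : ℝ → ℝ} {c : ℝ} (hf : IntervalIntegrable f volume 0 1)
    (h : ∀ x ∈ Icc (0:ℝ) 1, c ≤ f x) : c ≤ ∫ x in (0:ℝ)..1, f x := by
  simpa using intervalIntegral.integral_mono_on zero_le_one intervalIntegrable_const hf h

lemma apply_eq_left_of_hasDerivAt_zero {f : ℝ → ℝ} {a b : ℝ}
    (hf : ∀ x ∈ Icc a b, HasDerivAt f 0 x) : ∀ x ∈ Icc a b, f x = f a :=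
  constant_of_has_deriv_right_zero (fun x hx => (hf x hx).continuousAt.continuousWithinAt)
    fun x hx => (hf x (Ico_subset_Icc_self hx)).hasDerivWithinAt

namespace IsStationarySolution

variable {a f g : ℝ → ℝ} {h₀ h₁ : ℝ} {u p u' p' : ℝ → ℝ}

lemma sub (h : IsStationarySolution a f g h₀ h₁ u p)
    (h' : IsStationarySolution a f g h₀ h₁ u' p') :
    IsStationarySolution a 0 0 0 0 (u - u') (p - p') := by
  refine ⟨fun x hx => ⟨?_, ?_⟩, by simp [h.2.1, h'.2.1], by simp [h.2.2, h'.2.2]⟩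
  · exact ((h.1 x hx).1.sub (h'.1 x hx).1).congr_deriv (by simp)
  · exact ((h.1 x hx).2.sub (h'.1 x hx).2).congr_deriv (by simp; ring)

lemma eqOn_zero_of_homogeneous (ha : IntervalIntegrable a volume 0 1)
    (hA : ∫ x in (0:ℝ)..1, a x ≠ 0) (h : IsStationarySolution a 0 0 0 0 u p) :
    EqOn u 0 (Icc 0 1) ∧ EqOn p 0 (Icc 0 1) := by
  obtain ⟨hderiv, hp0, hp1⟩ := h
  have hu : ∀ x ∈ Icc (0:ℝ) 1, u x = u 0 :=
    apply_eq_left_of_hasDerivAt_zero fun x hx => (hderiv x hx).1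
  have hp' : ∀ x ∈ Icc (0:ℝ) 1, HasDerivAt p (-(a x * u 0)) x := fun x hx =>
    (hderiv x hx).2.congr_deriv (by simp [hu x hx])
  -- integrating `p' = -a ū(0)` over `[0,1]` and using `p(0) = p(1) = 0` forces `ū(0) = 0`
  have hu0 : u 0 = 0 := by
    have hftc := intervalIntegral.integral_eq_sub_of_hasDerivAt
      (fun x hx => hp' x (by rwa [uIcc_of_le zero_le_one] at hx)) (ha.mul_const (u 0)).neg
    rw [intervalIntegral.integral_neg, intervalIntegral.integral_mul_const, hp0, hp1] at hftc
    simpa [hA] using hftc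
  have hp : ∀ x ∈ Icc (0:ℝ) 1, p x = p 0 :=
    apply_eq_left_of_hasDerivAt_zero fun x hx => by simpa [hu0] using hp' x hx
  exact ⟨fun x hx => by simp [hu x hx, hu0], fun x hx => by simp [hp x hx, hp0]⟩

lemma eqOn (ha : IntervalIntegrable a volume 0 1) (hA : ∫ x in (0:ℝ)..1, a x ≠ 0)
    (h : IsStationarySolution a f g h₀ h₁ u p) (h' : IsStationarySolution a f g h₀ h₁ u' p') :
    EqOn u u' (Icc 0 1) ∧ EqOn p p' (Icc 0 1) := by
  obtain ⟨hu, hp⟩ := (h.sub h').eqOn_zero_of_homogeneous ha hA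
  exact ⟨fun x hx => sub_eq_zero.mp (hu hx), fun x hx => sub_eq_zero.mp (hp hx)⟩

lemma congr {a' f' g' : ℝ → ℝ} (ha : EqOn a a' (Icc 0 1)) (hf : EqOn f f' (Icc 0 1))
    (hg : EqOn g g' (Icc 0 1)) (h : IsStationarySolution a f g h₀ h₁ u p) :
    IsStationarySolution a' f' g' h₀ h₁ u p :=
  ⟨fun x hx => by rw [← ha hx, ← hf hx, ← hg hx]; exact h.1 x hx, h.2⟩

end IsStationarySolution

namespace StationaryDampedWave

/-- The constant of integration of `ū = c + ∫₀ˣ g`, chosen so that `p̄(1) = h₁`. -/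
noncomputable def velocityOffset (a f g : ℝ → ℝ) (h₀ h₁ : ℝ) : ℝ :=
  ((∫ t in (0:ℝ)..1, f t) - (∫ t in (0:ℝ)..1, a t * ∫ s in (0:ℝ)..t, g s) - h₁ + h₀) /
    ∫ t in (0:ℝ)..1, a t

noncomputable def velocity (a f g : ℝ → ℝ) (h₀ h₁ x : ℝ) : ℝ :=
  velocityOffset a f g h₀ h₁ + ∫ t in (0:ℝ)..x, g t

noncomputable def pressure (a f g : ℝ → ℝ) (h₀ h₁ x : ℝ) : ℝ :=
  h₀ + ∫ t in (0:ℝ)..x, (f t - a t * velocity a f g h₀ h₁ t)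

variable {a f g : ℝ → ℝ} {h₀ h₁ a₀ a₁ : ℝ}

lemma hasDerivAt_velocity (hg : Continuous g) (x : ℝ) :
    HasDerivAt (velocity a f g h₀ h₁) (g x) x :=
  (hg.integral_hasStrictDerivAt 0 x).hasDerivAt.const_add _

lemma continuous_velocity (hg : Continuous g) : Continuous (velocity a f g h₀ h₁) :=
  continuous_iff_continuousAt.mpr fun x => (hasDerivAt_velocity hg x).continuousAt

lemma continuous_damping_residual (ha : Continuous a) (hf : Continuous f) (hg : Continuous g) :
    Continuous fun x => f x - a x * velocity a f g h₀ h₁ x :=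
  hf.sub (ha.mul (continuous_velocity hg))

lemma hasDerivAt_pressure (ha : Continuous a) (hf : Continuous f) (hg : Continuous g) (x : ℝ) :
    HasDerivAt (pressure a f g h₀ h₁) (f x - a x * velocity a f g h₀ h₁ x) x :=
  ((continuous_damping_residual ha hf hg).integral_hasStrictDerivAt 0 x).hasDerivAt.const_add _

lemma pressure_zero : pressure a f g h₀ h₁ 0 = h₀ := by
  simp [pressure]

lemma pressure_one (ha : Continuous a) (hf : Continuous f) (hg : Continuous g)
    (hA : ∫ x in (0:ℝ)..1, a x ≠ 0) : pressure a f g h₀ h₁ 1 = h₁ := by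
  have hG : Continuous fun x => ∫ t in (0:ℝ)..x, g t :=
    intervalIntegral.continuous_primitive (fun _ _ => hg.intervalIntegrable _ _) 0
  have hsplit : ∫ t in (0:ℝ)..1, (f t - a t * velocity a f g h₀ h₁ t) =
      (∫ t in (0:ℝ)..1, f t) - (velocityOffset a f g h₀ h₁ * ∫ t in (0:ℝ)..1, a t) -
        ∫ t in (0:ℝ)..1, a t * ∫ s in (0:ℝ)..t, g s := by
    simp only [velocity, mul_add]
    rw [intervalIntegral.integral_sub (hf.intervalIntegrable _ _)
        ((by fun_prop : Continuous _).intervalIntegrable _ _),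
      intervalIntegral.integral_add
        ((by fun_prop : Continuous fun t => a t * velocityOffset a f g h₀ h₁).intervalIntegrable
          _ _)
        ((by fun_prop : Continuous fun t => a t * ∫ s in (0:ℝ)..t, g s).intervalIntegrable _ _),
      intervalIntegral.integral_mul_const]
    ring
  rw [pressure, hsplit, velocityOffset, div_mul_cancel₀ _ hA]
  ring

lemma isStationarySolution (ha : Continuous a) (hf : Continuous f) (hg : Continuous g)
    (hA : ∫ x in (0:ℝ)..1, a x ≠ 0) :
    IsStationarySolution a f g h₀ h₁ (velocity a f g h₀ h₁) (pressure a f g h₀ h₁) :=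
  ⟨fun x _ => ⟨hasDerivAt_velocity hg x, hasDerivAt_pressure ha hf hg x⟩, pressure_zero,
    pressure_one ha hf hg hA⟩

lemma abs_velocityOffset_le (ha : Continuous a) (hf : Continuous f) (hg : Continuous g)
    (ha₀ : 0 < a₀) (hab : ∀ x ∈ Icc (0:ℝ) 1, a₀ ≤ a x ∧ a x ≤ a₁) :
    |velocityOffset a f g h₀ h₁| ≤ (1 + a₁) / a₀ * dataNorm f g h₀ h₁ := by
  have hf_int : |∫ t in (0:ℝ)..1, f t| ≤ L2nrm f :=
    abs_primitive_le_L2nrm hf (right_mem_Icc.mpr zero_le_one)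
  have haG_int : |∫ t in (0:ℝ)..1, a t * ∫ s in (0:ℝ)..t, g s| ≤ a₁ * L2nrm g :=
    abs_primitive_le_of_abs_le (fun t ht => abs_mul_le_of_le_of_abs_le
        (ha₀.le.trans (hab t ht).1) (hab t ht).2 (abs_primitive_le_L2nrm hg ht))
      (right_mem_Icc.mpr zero_le_one)
  have ha₁ : 0 ≤ a₁ := by linarith [hab 0 (left_mem_Icc.mpr zero_le_one)]
  have hnum : |(∫ t in (0:ℝ)..1, f t) - (∫ t in (0:ℝ)..1, a t * ∫ s in (0:ℝ)..t, g s) - h₁ + h₀|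
      ≤ (1 + a₁) * dataNorm f g h₀ h₁ := by
    calc _ ≤ |∫ t in (0:ℝ)..1, f t| + |∫ t in (0:ℝ)..1, a t * ∫ s in (0:ℝ)..t, g s|
          + |h₁| + |h₀| :=
          (abs_add_le _ _).trans (add_le_add_left ((abs_sub _ _).trans
            (add_le_add_left (abs_sub _ _) _)) _)
      _ ≤ (1 + a₁) * dataNorm f g h₀ h₁ := by
          unfold dataNorm
          nlinarith [L2nrm_nonneg f, L2nrm_nonneg g, abs_nonneg h₀, abs_nonneg h₁]
  have hA := le_integral_of_forall_le (ha.intervalIntegrable 0 1) fun x hx => (hab x hx).1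
  rw [velocityOffset, abs_div, abs_of_pos (ha₀.trans_le hA), div_mul_eq_mul_div]
  exact div_le_div₀ (mul_nonneg (by linarith) (dataNorm_nonneg f g h₀ h₁)) hnum ha₀ hA

lemma abs_velocity_le (ha : Continuous a) (hf : Continuous f) (hg : Continuous g)
    (ha₀ : 0 < a₀) (hab : ∀ x ∈ Icc (0:ℝ) 1, a₀ ≤ a x ∧ a x ≤ a₁) {x : ℝ} (hx : x ∈ Icc (0:ℝ) 1) :
    |velocity a f g h₀ h₁ x| ≤ ((1 + a₁) / a₀ + 1) * dataNorm f g h₀ h₁ := by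
  have hg_le : L2nrm g ≤ dataNorm f g h₀ h₁ := by
    unfold dataNorm
    linarith [L2nrm_nonneg f, abs_nonneg h₀, abs_nonneg h₁]
  calc |velocity a f g h₀ h₁ x| ≤ |velocityOffset a f g h₀ h₁| + |∫ t in (0:ℝ)..x, g t| :=
        abs_add_le _ _
    _ ≤ (1 + a₁) / a₀ * dataNorm f g h₀ h₁ + dataNorm f g h₀ h₁ :=
        add_le_add (abs_velocityOffset_le ha hf hg ha₀ hab)
          ((abs_primitive_le_L2nrm hg hx).trans hg_le)
    _ = ((1 + a₁) / a₀ + 1) * dataNorm f g h₀ h₁ := by ring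

lemma abs_damping_mul_velocity_le (ha : Continuous a) (hf : Continuous f) (hg : Continuous g)
    (ha₀ : 0 < a₀) (hab : ∀ x ∈ Icc (0:ℝ) 1, a₀ ≤ a x ∧ a x ≤ a₁) {x : ℝ} (hx : x ∈ Icc (0:ℝ) 1) :
    |a x * velocity a f g h₀ h₁ x| ≤ a₁ * (((1 + a₁) / a₀ + 1) * dataNorm f g h₀ h₁) :=
  abs_mul_le_of_le_of_abs_le (ha₀.le.trans (hab x hx).1) (hab x hx).2
    (abs_velocity_le ha hf hg ha₀ hab hx)

lemma abs_pressure_le (ha : Continuous a) (hf : Continuous f) (hg : Continuous g)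
    (ha₀ : 0 < a₀) (hab : ∀ x ∈ Icc (0:ℝ) 1, a₀ ≤ a x ∧ a x ≤ a₁) {x : ℝ} (hx : x ∈ Icc (0:ℝ) 1) :
    |pressure a f g h₀ h₁ x| ≤ (1 + a₁ * ((1 + a₁) / a₀ + 1)) * dataNorm f g h₀ h₁ := by
  have hsplit : ∫ t in (0:ℝ)..x, (f t - a t * velocity a f g h₀ h₁ t) =
      (∫ t in (0:ℝ)..x, f t) - ∫ t in (0:ℝ)..x, a t * velocity a f g h₀ h₁ t :=
    intervalIntegral.integral_sub (hf.intervalIntegrable _ _)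
      ((ha.mul (continuous_velocity hg)).intervalIntegrable _ _)
  have hf_le : |h₀| + L2nrm f ≤ dataNorm f g h₀ h₁ := by
    unfold dataNorm
    linarith [L2nrm_nonneg g, abs_nonneg h₁]
  calc |pressure a f g h₀ h₁ x|
        ≤ |h₀| + (|∫ t in (0:ℝ)..x, f t| + |∫ t in (0:ℝ)..x, a t * velocity a f g h₀ h₁ t|) := by
        rw [pressure, hsplit]
        exact (abs_add_le _ _).trans (add_le_add le_rfl (abs_sub _ _))
    _ ≤ |h₀| + (L2nrm f + a₁ * (((1 + a₁) / a₀ + 1) * dataNorm f g h₀ h₁)) :=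
        add_le_add le_rfl (add_le_add (abs_primitive_le_L2nrm hf hx) (abs_primitive_le_of_abs_le
          (fun t ht => abs_damping_mul_velocity_le ha hf hg ha₀ hab ht) hx))
    _ ≤ (1 + a₁ * ((1 + a₁) / a₀ + 1)) * dataNorm f g h₀ h₁ := by linarith

lemma H1nrm_velocity_le (ha : Continuous a) (hf : Continuous f) (hg : Continuous g)
    (ha₀ : 0 < a₀) (hab : ∀ x ∈ Icc (0:ℝ) 1, a₀ ≤ a x ∧ a x ≤ a₁) :
    H1nrm (velocity a f g h₀ h₁) ≤ ((1 + a₁) / a₀ + 2) * dataNorm f g h₀ h₁ := by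
  have hS := dataNorm_nonneg f g h₀ h₁
  have hderiv : deriv (velocity a f g h₀ h₁) = g := funext fun x => (hasDerivAt_velocity hg x).deriv
  have hg_le : L2nrm g ≤ dataNorm f g h₀ h₁ := by
    unfold dataNorm
    linarith [L2nrm_nonneg f, abs_nonneg h₀, abs_nonneg h₁]
  have hK : 0 ≤ (1 + a₁) / a₀ + 1 := by
    have := hab 0 (left_mem_Icc.mpr zero_le_one)
    have : 0 ≤ a₁ := by linarith
    positivity
  calc H1nrm (velocity a f g h₀ h₁)
      ≤ ((1 + a₁) / a₀ + 1) * dataNorm f g h₀ h₁ + dataNorm f g h₀ h₁ := by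
        refine Real.sqrt_add_le_add_of_le_sq (by positivity) hS
          (L2nsq_le_sq_of_abs_le fun x hx => abs_velocity_le ha hf hg ha₀ hab hx) ?_
        rw [hderiv, L2nsq_eq_L2nrm_sq]
        exact pow_le_pow_left₀ (L2nrm_nonneg g) hg_le 2
    _ = ((1 + a₁) / a₀ + 2) * dataNorm f g h₀ h₁ := by ring

lemma H1nrm_pressure_le (ha : Continuous a) (hf : Continuous f) (hg : Continuous g)
    (ha₀ : 0 < a₀) (hab : ∀ x ∈ Icc (0:ℝ) 1, a₀ ≤ a x ∧ a x ≤ a₁) :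
    H1nrm (pressure a f g h₀ h₁) ≤ 3 * (1 + a₁ * ((1 + a₁) / a₀ + 1)) * dataNorm f g h₀ h₁ := by
  set S := dataNorm f g h₀ h₁
  set M := a₁ * (((1 + a₁) / a₀ + 1) * S)
  have hS : 0 ≤ S := dataNorm_nonneg f g h₀ h₁
  have hM : 0 ≤ M := (abs_nonneg _).trans
    (abs_damping_mul_velocity_le ha hf hg ha₀ hab (left_mem_Icc.mpr zero_le_one))
  have hf_le : L2nrm f ≤ S := by
    simp only [S, dataNorm]
    linarith [L2nrm_nonneg g, abs_nonneg h₀, abs_nonneg h₁]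
  have hderiv : deriv (pressure a f g h₀ h₁) = fun x => f x - a x * velocity a f g h₀ h₁ x :=
    funext fun x => (hasDerivAt_pressure ha hf hg x).deriv
  have hderiv_le : L2nsq (deriv (pressure a f g h₀ h₁)) ≤ 2 * L2nsq f + 2 * M ^ 2 := by
    rw [hderiv]
    exact L2nsq_le_of_abs_le_abs_add (continuous_damping_residual ha hf hg) hf fun x hx =>
      (abs_sub _ _).trans (add_le_add le_rfl (abs_damping_mul_velocity_le ha hf hg ha₀ hab hx))
  calc H1nrm (pressure a f g h₀ h₁) ≤ (S + M) + 2 * (S + M) := by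
        refine Real.sqrt_add_le_add_of_le_sq (by positivity) (by positivity)
          (L2nsq_le_sq_of_abs_le fun x hx => ?_) (hderiv_le.trans ?_)
        · exact (abs_pressure_le ha hf hg ha₀ hab hx).trans_eq (by ring)
        · rw [L2nsq_eq_L2nrm_sq]
          nlinarith [L2nrm_nonneg f]
    _ = 3 * (1 + a₁ * ((1 + a₁) / a₀ + 1)) * S := by ring

end StationaryDampedWave

open StationaryDampedWave

/-- Well-posedness of the stationary damped wave system: unique continuously
differentiable solution with an a-priori `H¹`-bound whose constant depends
only on `a₀, a₁`. -/
theorem stmt7 (a₀ a₁ : ℝ) (ha₀ : 0 < a₀) (ha₀₁ : a₀ ≤ a₁) :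
    ∃ C > (0:ℝ),
      ∀ a : ℝ → ℝ, ContinuousOn a (Icc (0:ℝ) 1) →
        (∀ x ∈ Icc (0:ℝ) 1, a₀ ≤ a x ∧ a x ≤ a₁) →
      ∀ f g : ℝ → ℝ, ContinuousOn f (Icc (0:ℝ) 1) → ContinuousOn g (Icc (0:ℝ) 1) →
      ∀ h₀ h₁ : ℝ,
      ∃ ub pb : ℝ → ℝ,
        IsStationarySolution a f g h₀ h₁ ub pb ∧
        (∀ ub' pb' : ℝ → ℝ, IsStationarySolution a f g h₀ h₁ ub' pb' →
            EqOn ub' ub (Icc (0:ℝ) 1) ∧ EqOn pb' pb (Icc (0:ℝ) 1)) ∧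
        Real.sqrt (L2nsq ub + L2nsq (deriv ub))
            + Real.sqrt (L2nsq pb + L2nsq (deriv pb))
          ≤ C * (L2nrm f + L2nrm g + |h₀| + |h₁|) := by
  have ha₁ : 0 < a₁ := ha₀.trans_le ha₀₁
  refine ⟨(1 + a₁) / a₀ + 2 + 3 * (1 + a₁ * ((1 + a₁) / a₀ + 1)), by positivity, ?_⟩
  intro a ha hab f g hf hg h₀ h₁
  -- the solution formulas need `a, f, g` continuous on a neighbourhood of `[0,1]`
  obtain ⟨A, hA, haA⟩ := ha.exists_continuous_eqOn_Icc zero_le_one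
  obtain ⟨F, hF, hfF⟩ := hf.exists_continuous_eqOn_Icc zero_le_one
  obtain ⟨G, hG, hgG⟩ := hg.exists_continuous_eqOn_Icc zero_le_one
  have hAb : ∀ x ∈ Icc (0:ℝ) 1, a₀ ≤ A x ∧ A x ≤ a₁ := fun x hx => haA hx ▸ hab x hx
  have hA_int : ∫ x in (0:ℝ)..1, A x ≠ 0 :=
    (ha₀.trans_le <| le_integral_of_forall_le (hA.intervalIntegrable 0 1)
      fun x hx => (hAb x hx).1).ne'
  have hsol := isStationarySolution (h₀ := h₀) (h₁ := h₁) hA hF hG hA_int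
  refine ⟨velocity A F G h₀ h₁, pressure A F G h₀ h₁, hsol.congr haA hfF hgG,
    fun u p h => (h.congr haA.symm hfF.symm hgG.symm).eqOn (hA.intervalIntegrable 0 1) hA_int hsol,
    ?_⟩
  rw [L2nrm_congr hfF.symm, L2nrm_congr hgG.symm, add_mul]
  exact add_le_add (H1nrm_velocity_le hA hF hG ha₀ hAb) (H1nrm_pressure_le hA hF hG ha₀ hAb)
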